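/- arXiv:2006.04517 — 6 statements merged into one kernel-verified Lean document; each statement's English description precedes it below -/
import Mathlib

section
/- The set 𝔐₀ = {x ∈ 𝔐 : tr(x) = 0 and Sc(x) = 0} is a 2-dimensional F-subspace of 𝔐, and moreover it is an ideal of 𝔐 (closed under multiplication by arbitrary elements of 𝔐). -/
/-! Both `Sc` and `tr` are multiplicative, so the kernel `𝔐₀` of the linear map
`x ↦ (tr x, Sc x)` absorbs products on either side. That map `𝔐 → F²` is surjective,
so rank–nullity gives `dim 𝔐₀ = 4 - 2`. -/

/-- The rock-paper-scissors monad algebra: coordinates w.r.t. the basis `{1, P, R, S}`. -/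
def RPS (F : Type*) := F × F × F × F

namespace RPS

variable {F : Type*} [Field F]

instance : AddCommGroup (RPS F) := inferInstanceAs (AddCommGroup (F × F × F × F))
instance : Module F (RPS F) := inferInstanceAs (Module F (F × F × F × F))

/-- Build the element `x0·1 + a·P + b·R + c·S`. -/
def mk4 (x0 a b c : F) : RPS F := (x0, a, b, c)

/-- Scalar part: coefficient of `1`. -/
def sc (x : RPS F) : F := x.1
/-- Coefficient of `P`. -/
def cP (x : RPS F) : F := x.2.1
/-- Coefficient of `R`. -/
def cR (x : RPS F) : F := x.2.2.1
/-- Coefficient of `S`. -/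
def cS (x : RPS F) : F := x.2.2.2

instance : One (RPS F) := ⟨mk4 1 0 0 0⟩

/-- The commutative non-associative multiplication determined by: `1` is the unit,
`P, R, S` are idempotent, and `P·R = R·P = P`, `P·S = S·P = S`, `S·R = R·S = R`. -/
instance : Mul (RPS F) :=
  ⟨fun x y => mk4 (sc x * sc y)
    (sc x * cP y + sc y * cP x + cP x * cP y + cP x * cR y + cR x * cP y)
    (sc x * cR y + sc y * cR x + cR x * cR y + cR x * cS y + cS x * cR y)
    (sc x * cS y + sc y * cS x + cS x * cS y + cP x * cS y + cS x * cP y)⟩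

/-- The basis element `P`. -/
def eP : RPS F := mk4 0 1 0 0
/-- The basis element `R`. -/
def eR : RPS F := mk4 0 0 1 0
/-- The basis element `S`. -/
def eS : RPS F := mk4 0 0 0 1

/-- The trace homomorphism `tr(x0·1 + aP + bR + cS) = x0 + a + b + c`. -/
def tr (x : RPS F) : F := sc x + cP x + cR x + cS x

/-- The linear map `φ` with `1 ↦ 1`, `P ↦ R`, `R ↦ S`, `S ↦ P`. -/
def phi (x : RPS F) : RPS F := mk4 (sc x) (cS x) (cP x) (cR x)

end RPS

namespace RPS

variable {F : Type*}

@[simp]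
theorem sc_mk4 (x0 a b c : F) : sc (mk4 x0 a b c) = x0 := rfl

variable [Field F]

theorem add_def (x y : RPS F) :
    x + y = mk4 (sc x + sc y) (cP x + cP y) (cR x + cR y) (cS x + cS y) := rfl

theorem smul_def (c : F) (x : RPS F) :
    c • x = mk4 (c * sc x) (c * cP x) (c * cR x) (c * cS x) := rfl

theorem mul_def (x y : RPS F) : x * y = mk4 (sc x * sc y)
    (sc x * cP y + sc y * cP x + cP x * cP y + cP x * cR y + cR x * cP y)
    (sc x * cR y + sc y * cR x + cR x * cR y + cR x * cS y + cS x * cR y)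
    (sc x * cS y + sc y * cS x + cS x * cS y + cP x * cS y + cS x * cP y) := rfl

@[simp]
theorem tr_mk4 (x0 a b c : F) : tr (mk4 x0 a b c) = x0 + a + b + c := rfl

theorem sc_mul (x y : RPS F) : sc (x * y) = sc x * sc y := rfl

theorem tr_mul (x y : RPS F) : tr (x * y) = tr x * tr y := by
  rw [mul_def, tr_mk4, tr, tr]
  ring

def trSc : RPS F →ₗ[F] F × F where
  toFun x := (tr x, sc x)
  map_add' x y := by
    rw [add_def, tr_mk4, sc_mk4, tr, tr, Prod.mk_add_mk]
    congr 1
    ring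
  map_smul' c x := by
    rw [smul_def, tr_mk4, sc_mk4, tr, RingHom.id_apply, Prod.smul_mk, smul_eq_mul, smul_eq_mul]
    congr 1
    ring

theorem trSc_apply (x : RPS F) : trSc x = (tr x, sc x) := rfl

theorem trSc_mul (x y : RPS F) : trSc (x * y) = trSc x * trSc y := by
  rw [trSc_apply, tr_mul, sc_mul]
  rfl

theorem trSc_surjective : Function.Surjective (trSc : RPS F →ₗ[F] F × F) := by
  rintro ⟨a, b⟩
  refine ⟨mk4 b (a - b) 0 0, ?_⟩
  rw [trSc_apply, tr_mk4, sc_mk4]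
  congr 1
  ring

instance : FiniteDimensional F (RPS F) := inferInstanceAs (FiniteDimensional F (F × F × F × F))

theorem finrank_eq_four : Module.finrank F (RPS F) = 4 := by
  show Module.finrank F (F × F × F × F) = 4
  simp

theorem finrank_ker_trSc : Module.finrank F (LinearMap.ker (trSc : RPS F →ₗ[F] F × F)) = 2 := by
  have := LinearMap.finrank_range_add_finrank_ker (trSc : RPS F →ₗ[F] F × F)
  rw [LinearMap.range_eq_top.2 trSc_surjective, finrank_top, finrank_eq_four] at this
  rw [Module.finrank_prod, Module.finrank_self] at this
  omega

theorem mul_mem_ker_trSc {x : RPS F} (hx : x ∈ LinearMap.ker trSc) (y : RPS F) :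
    x * y ∈ LinearMap.ker trSc ∧ y * x ∈ LinearMap.ker trSc := by
  rw [LinearMap.mem_ker] at hx
  simp only [LinearMap.mem_ker, trSc_mul, hx, zero_mul, mul_zero, and_self]

end RPS

open RPS in
/-- `𝔐₀ = {x ∈ 𝔐 : tr x = 0, Sc x = 0}` is a 2-dimensional `F`-subspace of `𝔐`
and is an ideal of `𝔐`. -/
theorem M0_is_two_dim_ideal {F : Type*} [Field F] :
    ∃ W : Submodule F (RPS F),
      (W : Set (RPS F)) = {x | tr x = 0 ∧ sc x = 0} ∧
      Module.finrank F W = 2 ∧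
      ∀ x ∈ W, ∀ y : RPS F, x * y ∈ W ∧ y * x ∈ W := by
  refine ⟨LinearMap.ker trSc, ?_, finrank_ker_trSc, fun x hx y => mul_mem_ker_trSc hx y⟩
  ext x
  simp [trSc_apply]
end

section
/- The linear map φ: 𝔐 → 𝔐 defined on the basis by φ(1) = 1, φ(P) = R, φ(R) = S, φ(S) = P is an algebra automorphism of 𝔐, and φ³ = id. -/
open RPS in
/-- The linear map `φ` with `1 ↦ 1`, `P ↦ R`, `R ↦ S`, `S ↦ P` is an algebra
automorphism of `𝔐` and `φ³ = id`. -/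
theorem phi_is_automorphism_order_three {F : Type*} [Field F] :
    IsLinearMap F (phi : RPS F → RPS F) ∧
      (∀ x y : RPS F, phi (x * y) = phi x * phi y) ∧
      phi (1 : RPS F) = 1 ∧
      Function.Bijective (phi : RPS F → RPS F) ∧
      (∀ x : RPS F, phi (phi (phi x)) = x) := by
  refine ⟨⟨fun x y => rfl, fun c x => rfl⟩, ?_, rfl, ?_, fun x => rfl⟩
  · rintro ⟨x0,a,b,c⟩ ⟨y0,d,e,f⟩
    show mk4 _ _ _ _ = mk4 _ _ _ _
    refine Prod.ext ?_ (Prod.ext ?_ (Prod.ext ?_ ?_)) <;>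
      simp only [phi, mk4, sc, cP, cR, cS, HMul.hMul, Mul.mul] <;> ring
  · constructor
    · exact fun x y h => congrArg (fun z => phi (phi z)) h
    · intro y
      exact ⟨mk4 (sc y) (cR y) (cS y) (cP y), rfl⟩
end

section
/- Suppose char F ≠ 3 and ω² + ω + 1 = 0 in F. The automorphism φ of 𝔐 (given by P ↦ R ↦ S ↦ P, 1 ↦ 1) restricts to 𝔐₀ and satisfies φ(U) = ω²U and φ(V) = ωV, where U, V are the good basis elements of 𝔐₀. -/
open RPS in
/-- The automorphism `φ` (with `P ↦ R ↦ S ↦ P`) restricts to `𝔐₀` and acts on the good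
basis by `φ(U) = ω²·U`, `φ(V) = ω·V`. -/
theorem phi_on_good_basis {F : Type*} [Field F] (h3 : (3 : F) ≠ 0)
    (ω : F) (hω : ω ^ 2 + ω + 1 = 0) :
    (∀ x : RPS F, tr x = 0 → sc x = 0 → tr (phi x) = 0 ∧ sc (phi x) = 0) ∧
    phi (((1 + 2 * ω) / 3) • (mk4 0 1 ω (ω ^ 2) : RPS F)) =
      ω ^ 2 • (((1 + 2 * ω) / 3) • (mk4 0 1 ω (ω ^ 2) : RPS F)) ∧
    phi (((1 + 2 * ω ^ 2) / 3) • (mk4 0 1 (ω ^ 2) ω : RPS F)) =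
      ω • (((1 + 2 * ω ^ 2) / 3) • (mk4 0 1 (ω ^ 2) ω : RPS F)) := by
  have hsm : ∀ (k x a b c : F), k • (mk4 x a b c : RPS F) = mk4 (k*x) (k*a) (k*b) (k*c) :=
    fun _ _ _ _ _ => rfl
  refine ⟨fun x h1 h2 => ⟨?_, h2⟩, ?_, ?_⟩
  · simp only [tr, phi, sc, cP, cR, cS, mk4] at *
    linear_combination h1
  · simp only [hsm]
    simp only [phi, mk4, sc, cP, cR, cS]
    refine Prod.ext ?_ (Prod.ext ?_ (Prod.ext ?_ ?_))
    · show (1 + 2*ω)/3 * 0 = ω^2 * ((1 + 2*ω)/3 * 0); ring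
    · show (1 + 2*ω)/3 * ω^2 = ω^2 * ((1 + 2*ω)/3 * 1); ring
    · show (1 + 2*ω)/3 * 1 = ω^2 * ((1 + 2*ω)/3 * ω)
      linear_combination (-(1 + 2*ω)/3 * (ω - 1)) * hω
    · show (1 + 2*ω)/3 * ω = ω^2 * ((1 + 2*ω)/3 * ω^2)
      linear_combination (-(1 + 2*ω)/3 * ω * (ω - 1)) * hω
  · simp only [hsm]
    simp only [phi, mk4, sc, cP, cR, cS]
    refine Prod.ext ?_ (Prod.ext ?_ (Prod.ext ?_ ?_))
    · show (1 + 2*ω^2)/3 * 0 = ω * ((1 + 2*ω^2)/3 * 0); ring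
    · show (1 + 2*ω^2)/3 * ω = ω * ((1 + 2*ω^2)/3 * 1); ring
    · show (1 + 2*ω^2)/3 * 1 = ω * ((1 + 2*ω^2)/3 * ω^2)
      linear_combination (-(1 + 2*ω^2)/3 * (ω - 1)) * hω
    · show (1 + 2*ω^2)/3 * ω^2 = ω * ((1 + 2*ω^2)/3 * ω)
      ring
end

section
/- The algebra 𝔐₀ is simple: it contains no nontrivial proper ideals. -/
/-- The 2-dimensional "good basis" algebra `𝔐₀` with basis `U, V` satisfying
`U² = V`, `V² = U`, `U·V = V·U = 0`; coordinates w.r.t. the basis `{U, V}`. -/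
def GoodAlg (F : Type*) := F × F

namespace GoodAlg

variable {F : Type*} [Field F]

instance : AddCommGroup (GoodAlg F) := inferInstanceAs (AddCommGroup (F × F))
instance : Module F (GoodAlg F) := inferInstanceAs (Module F (F × F))

def mk2 (a b : F) : GoodAlg F := (a, b)

/-- Coefficient of `U`. -/
def uc (x : GoodAlg F) : F := x.1
/-- Coefficient of `V`. -/
def vc (x : GoodAlg F) : F := x.2

/-- Multiplication: `(aU + bV)·(cU + dV) = bd·U + ac·V`, i.e. `U² = V`, `V² = U`, `UV = VU = 0`. -/
instance : Mul (GoodAlg F) := ⟨fun x y => mk2 (vc x * vc y) (uc x * uc y)⟩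

/-- The basis element `U`. -/
def U : GoodAlg F := mk2 1 0
/-- The basis element `V`. -/
def V : GoodAlg F := mk2 0 1

end GoodAlg


/-! A nonzero `x = aU + bV` gives `x·U = aV` and `x·V = bU`, so one of `U`, `V` lies in the ideal;
as `U² = V` and `V² = U`, both do, and they span `𝔐₀`. -/

namespace GoodAlg

section Coordinates

variable {F : Type*}

@[simp] lemma uc_mk2 (a b : F) : uc (mk2 a b) = a := rfl
@[simp] lemma vc_mk2 (a b : F) : vc (mk2 a b) = b := rfl

lemma ext {x y : GoodAlg F} (hu : uc x = uc y) (hv : vc x = vc y) : x = y := Prod.ext hu hv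

end Coordinates

variable {F : Type*} [Field F]

@[simp] lemma uc_U : uc (U : GoodAlg F) = 1 := rfl
@[simp] lemma vc_U : vc (U : GoodAlg F) = 0 := rfl
@[simp] lemma uc_V : uc (V : GoodAlg F) = 0 := rfl
@[simp] lemma vc_V : vc (V : GoodAlg F) = 1 := rfl
@[simp] lemma uc_add (x y : GoodAlg F) : uc (x + y) = uc x + uc y := rfl
@[simp] lemma vc_add (x y : GoodAlg F) : vc (x + y) = vc x + vc y := rfl
@[simp] lemma uc_smul (c : F) (x : GoodAlg F) : uc (c • x) = c * uc x := rfl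
@[simp] lemma vc_smul (c : F) (x : GoodAlg F) : vc (c • x) = c * vc x := rfl
@[simp] lemma uc_zero : uc (0 : GoodAlg F) = 0 := rfl
@[simp] lemma vc_zero : vc (0 : GoodAlg F) = 0 := rfl

lemma mul_def (x y : GoodAlg F) : x * y = mk2 (vc x * vc y) (uc x * uc y) := rfl

lemma eq_uc_smul_U_add_vc_smul_V (x : GoodAlg F) : x = uc x • U + vc x • V :=
  ext (by simp) (by simp)

lemma mul_U (x : GoodAlg F) : x * U = uc x • V :=
  ext (by simp [mul_def]) (by simp [mul_def])

lemma mul_V (x : GoodAlg F) : x * V = vc x • U :=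
  ext (by simp [mul_def]) (by simp [mul_def])

lemma U_mul_U : (U : GoodAlg F) * U = V := by simp [mul_U]

lemma V_mul_V : (V : GoodAlg F) * V = U := by simp [mul_V]

lemma uc_ne_zero_or_vc_ne_zero {x : GoodAlg F} (hx : x ≠ 0) : uc x ≠ 0 ∨ vc x ≠ 0 := by
  by_contra! h
  exact hx (ext (by simp [h.1]) (by simp [h.2]))

section RightIdeal

variable {W : Submodule F (GoodAlg F)}

lemma U_mem_of_ne_zero_mem (hW : ∀ x ∈ W, ∀ y : GoodAlg F, x * y ∈ W)
    {x : GoodAlg F} (hxW : x ∈ W) (hx : x ≠ 0) : U ∈ W := by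
  rcases uc_ne_zero_or_vc_ne_zero hx with hu | hv
  · have hV : V ∈ W := by
      simpa [mul_U, smul_smul, hu] using W.smul_mem (uc x)⁻¹ (hW x hxW U)
    simpa [V_mul_V] using hW V hV V
  · simpa [mul_V, smul_smul, hv] using W.smul_mem (vc x)⁻¹ (hW x hxW V)

lemma eq_top_of_U_mem (hW : ∀ x ∈ W, ∀ y : GoodAlg F, x * y ∈ W) (hU : U ∈ W) : W = ⊤ := by
  have hV : V ∈ W := by simpa [U_mul_U] using hW U hU U
  refine eq_top_iff.mpr fun x _ => ?_
  rw [eq_uc_smul_U_add_vc_smul_V x]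
  exact W.add_mem (W.smul_mem _ hU) (W.smul_mem _ hV)

end RightIdeal

end GoodAlg

open GoodAlg in
theorem M0_is_simple_general {F : Type*} [Field F] :
    ∀ W : Submodule F (GoodAlg F),
      (∀ x ∈ W, ∀ y : GoodAlg F, x * y ∈ W ∧ y * x ∈ W) → W = ⊥ ∨ W = ⊤ := by
  intro W hW
  have hWright : ∀ x ∈ W, ∀ y : GoodAlg F, x * y ∈ W := fun x hx y => (hW x hx y).1
  refine or_iff_not_imp_left.mpr fun hbot => ?_
  obtain ⟨x, hxW, hx⟩ := (Submodule.ne_bot_iff W).mp hbot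
  exact eq_top_of_U_mem hWright (U_mem_of_ne_zero_mem hWright hxW hx)

open GoodAlg in
/-- The algebra `𝔐₀` is simple: it has no nontrivial proper ideals. -/
theorem M0_is_simple {F : Type*} [Field F] (h3 : (3 : F) ≠ 0)
    (ω : F) (hω : ω ^ 2 + ω + 1 = 0) :
    ∀ W : Submodule F (GoodAlg F),
      (∀ x ∈ W, ∀ y : GoodAlg F, x * y ∈ W ∧ y * x ∈ W) → W = ⊥ ∨ W = ⊤ :=
  M0_is_simple_general
end

section
/- Let p be a multilinear commutative non-associative polynomial over F with nonzero sum of coefficients c. Then for every idempotent I of the algebra 𝔐̃ (e.g. I = P, R, or S), the element c·I lies in the image of p on 𝔐̃. Consequently the linear span of the image of p on 𝔐̃ is all of 𝔐̃, and the image cannot be contained in any of the subspaces ⟨W⟩, ⟨U,W⟩, or ⟨V,W⟩. -/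
/-- The multiset of occurrences of variables in a non-associative monomial. -/
def occurs {α : Type*} : FreeMagma α → Multiset α
  | .of a => {a}
  | .mul x y => occurs x + occurs y

/-- A (non-associative) multilinear polynomial in `m` variables over `F`, encoded as a finitely
supported linear combination of non-associative monomials (elements of the free magma), is
multilinear if every monomial contains each of the `m` variables exactly once. -/
def IsMultilinear {F : Type*} [Field F] {m : ℕ} (p : FreeMagma (Fin m) →₀ F) : Prop :=
  ∀ w ∈ p.support, occurs w = (Finset.univ : Finset (Fin m)).val

/-- Evaluation of a non-associative polynomial on an `F`-algebra `A`. -/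
def evalPoly {F : Type*} [Field F] {A : Type*} [AddCommGroup A] [Module F A] [Mul A]
    {m : ℕ} (p : FreeMagma (Fin m) →₀ F) (v : Fin m → A) : A :=
  p.sum fun w c => c • (FreeMagma.lift v : FreeMagma (Fin m) →ₙ* A) w

section Aux

open RPS

variable {F : Type*} [Field F]

lemma RPS.sc_mul' (x y : RPS F) : sc (x * y) = sc x * sc y := rfl

/-- Any monomial evaluated at a constant idempotent gives that idempotent. -/
lemma lift_const {m : ℕ} (I : RPS F) (hI : I * I = I) (w : FreeMagma (Fin m)) :
    (FreeMagma.lift (fun _ : Fin m => I) : FreeMagma (Fin m) →ₙ* RPS F) w = I := by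
  induction w with
  | ih1 a => simp
  | ih2 x y ihx ihy => rw [map_mul, ihx, ihy, hI]

lemma lift_sc {m : ℕ} (v : Fin m → RPS F) (hv : ∀ i, sc (v i) = 0)
    (w : FreeMagma (Fin m)) :
    sc ((FreeMagma.lift v : FreeMagma (Fin m) →ₙ* RPS F) w) = 0 := by
  induction w with
  | ih1 a => simpa using hv a
  | ih2 x y ihx ihy => rw [map_mul, RPS.sc_mul', ihx, ihy, mul_zero]

/-- `sc` as a linear map. -/
def scLin : RPS F →ₗ[F] F where
  toFun := sc
  map_add' _ _ := rfl
  map_smul' _ _ := rfl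

lemma mem_span_eRS (x : RPS F) (hx : sc x = 0) :
    x ∈ Submodule.span F ({eP, eR, eS} : Set (RPS F)) := by
  have hx' : x = cP x • eP + cR x • eR + cS x • eS := by
    obtain ⟨x0, a, b, c⟩ := x
    simp only [sc] at hx
    subst hx
    refine Prod.ext ?_ (Prod.ext ?_ (Prod.ext ?_ ?_))
    · show (0:F) = a * 0 + b * 0 + c * 0; ring
    · show a = a * 1 + b * 0 + c * 0; ring
    · show b = a * 0 + b * 1 + c * 0; ring
    · show c = a * 0 + b * 0 + c * 1; ring
  rw [hx']
  refine Submodule.add_mem _ (Submodule.add_mem _ ?_ ?_) ?_ <;>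
    exact Submodule.smul_mem _ _ (Submodule.subset_span (by simp))

end Aux

open RPS in
/-- For a multilinear polynomial `p` with nonzero coefficient sum `c`, the element `c • I`
lies in the image of `p` on `𝔐̃ = ker Sc` for every idempotent `I` of `𝔐̃`; consequently
the span of that image is all of `𝔐̃ = ⟨P, R, S⟩`, and the image is not contained in any of
`⟨W⟩`, `⟨U, W⟩`, `⟨V, W⟩`. -/
theorem image_on_Mtilde_spans {F : Type*} [Field F] (h3 : (3 : F) ≠ 0)
    (ω : F) (hω : ω ^ 2 + ω + 1 = 0) {m : ℕ}
    (p : FreeMagma (Fin m) →₀ F) (hml : IsMultilinear p)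
    (hc : ∑ w ∈ p.support, p w ≠ 0) :
    (∀ I : RPS F, sc I = 0 → I * I = I →
      (∑ w ∈ p.support, p w) • I ∈
        {x : RPS F | ∃ v : Fin m → RPS F, (∀ i, sc (v i) = 0) ∧ evalPoly p v = x}) ∧
    Submodule.span F
        {x : RPS F | ∃ v : Fin m → RPS F, (∀ i, sc (v i) = 0) ∧ evalPoly p v = x} =
      Submodule.span F {eP, eR, eS} ∧
    ¬ {x : RPS F | ∃ v : Fin m → RPS F, (∀ i, sc (v i) = 0) ∧ evalPoly p v = x} ⊆
        (Submodule.span F {((1 : F) / 3) • (mk4 0 1 1 1 : RPS F)} : Submodule F (RPS F)) ∧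
    ¬ {x : RPS F | ∃ v : Fin m → RPS F, (∀ i, sc (v i) = 0) ∧ evalPoly p v = x} ⊆
        (Submodule.span F {((1 + 2 * ω) / 3) • (mk4 0 1 ω (ω ^ 2) : RPS F),
          ((1 : F) / 3) • (mk4 0 1 1 1 : RPS F)} : Submodule F (RPS F)) ∧
    ¬ {x : RPS F | ∃ v : Fin m → RPS F, (∀ i, sc (v i) = 0) ∧ evalPoly p v = x} ⊆
        (Submodule.span F {((1 + 2 * ω ^ 2) / 3) • (mk4 0 1 (ω ^ 2) ω : RPS F),
          ((1 : F) / 3) • (mk4 0 1 1 1 : RPS F)} : Submodule F (RPS F)) := by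
  set c := ∑ w ∈ p.support, p w with hcdef
  set Img := {x : RPS F | ∃ v : Fin m → RPS F, (∀ i, sc (v i) = 0) ∧ evalPoly p v = x}
    with hImg
  -- part 1
  have part1 : ∀ I : RPS F, sc I = 0 → I * I = I → c • I ∈ Img := by
    intro I hsc hid
    refine ⟨fun _ => I, fun _ => hsc, ?_⟩
    unfold evalPoly
    rw [Finsupp.sum]
    calc (∑ w ∈ p.support, p w • (FreeMagma.lift (fun _ : Fin m => I) :
            FreeMagma (Fin m) →ₙ* RPS F) w)
        = ∑ w ∈ p.support, p w • I := by
          refine Finset.sum_congr rfl fun w _ => ?_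
          rw [lift_const I hid]
      _ = c • I := by rw [← Finset.sum_smul]
  -- images have scalar part 0
  have himg_sc : ∀ x ∈ Img, sc x = 0 := by
    rintro x ⟨v, hv, rfl⟩
    unfold evalPoly
    rw [Finsupp.sum]
    have : sc (∑ w ∈ p.support, p w • (FreeMagma.lift v :
        FreeMagma (Fin m) →ₙ* RPS F) w) =
        ∑ w ∈ p.support, p w * sc ((FreeMagma.lift v :
        FreeMagma (Fin m) →ₙ* RPS F) w) := by
      rw [show (sc : RPS F → F) = (scLin : RPS F →ₗ[F] F) from rfl, map_sum]
      simp [scLin]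
    rw [this]
    simp [lift_sc v hv]
  have himg_span : Img ⊆ (Submodule.span F ({eP, eR, eS} : Set (RPS F)) : Set (RPS F)) :=
    fun x hx => mem_span_eRS x (himg_sc x hx)
  -- idempotents
  have hidP : (eP : RPS F) * eP = eP := by
    refine Prod.ext ?_ (Prod.ext ?_ (Prod.ext ?_ ?_))
    · show (0:F) * 0 = 0; ring
    · show (0:F)*1 + 0*1 + 1*1 + 1*0 + 0*1 = 1; ring
    · show (0:F)*0 + 0*0 + 0*0 + 0*0 + 0*0 = 0; ring
    · show (0:F)*0 + 0*0 + 0*0 + 1*0 + 0*1 = 0; ring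
  have hidR : (eR : RPS F) * eR = eR := by
    refine Prod.ext ?_ (Prod.ext ?_ (Prod.ext ?_ ?_))
    · show (0:F) * 0 = 0; ring
    · show (0:F)*0 + 0*0 + 0*0 + 0*1 + 1*0 = 0; ring
    · show (0:F)*1 + 0*1 + 1*1 + 1*0 + 0*1 = 1; ring
    · show (0:F)*0 + 0*0 + 0*0 + 0*0 + 0*0 = 0; ring
  have hidS : (eS : RPS F) * eS = eS := by
    refine Prod.ext ?_ (Prod.ext ?_ (Prod.ext ?_ ?_))
    · show (0:F) * 0 = 0; ring
    · show (0:F)*0 + 0*0 + 0*0 + 0*0 + 0*0 = 0; ring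
    · show (0:F)*0 + 0*0 + 0*0 + 0*1 + 1*0 = 0; ring
    · show (0:F)*1 + 0*1 + 1*1 + 0*1 + 1*0 = 1; ring
  have hP : c • (eP : RPS F) ∈ Img := part1 eP rfl hidP
  have hR : c • (eR : RPS F) ∈ Img := part1 eR rfl hidR
  have hS : c • (eS : RPS F) ∈ Img := part1 eS rfl hidS
  -- part 2
  have part2 : Submodule.span F Img = Submodule.span F ({eP, eR, eS} : Set (RPS F)) := by
    apply le_antisymm
    · exact Submodule.span_le.2 himg_span
    · refine Submodule.span_le.2 ?_
      rintro x hx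
      have key : ∀ y : RPS F, c • y ∈ Img → y ∈ Submodule.span F Img := by
        intro y hy
        have : y = c⁻¹ • (c • y) := by rw [smul_smul, inv_mul_cancel₀ hc, one_smul]
        rw [this]
        exact Submodule.smul_mem _ _ (Submodule.subset_span hy)
      rcases hx with h | h | h <;> subst h
      · exact key _ hP
      · exact key _ hR
      · exact key _ hS
  refine ⟨part1, part2, ?_, ?_, ?_⟩
  -- common ω facts
  · -- ⟨W⟩
    intro hsub
    have := hsub hP
    rw [SetLike.mem_coe, Submodule.mem_span_singleton] at this
    obtain ⟨a, ha⟩ := this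
    have h2 : a • (((1:F)/3) • (mk4 0 1 1 1 : RPS F)) = c • (eP : RPS F) := ha
    have e1 : a * ((1:F)/3 * 1) = c * 1 := congrArg (fun z : RPS F => cP z) h2
    have e2 : a * ((1:F)/3 * 1) = c * 0 := congrArg (fun z : RPS F => cR z) h2
    exact hc (by linear_combination e2 - e1)
  · -- ⟨U, W⟩
    intro hsub
    have := hsub hP
    rw [SetLike.mem_coe, Submodule.mem_span_pair] at this
    obtain ⟨a, b, hab⟩ := this
    have e2 : a * ((1 + 2*ω)/3 * 1) + b * ((1:F)/3 * 1) = c * 1 :=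
      congrArg (fun z : RPS F => cP z) hab
    have e3 : a * ((1 + 2*ω)/3 * ω) + b * ((1:F)/3 * 1) = c * 0 :=
      congrArg (fun z : RPS F => cR z) hab
    have e4 : a * ((1 + 2*ω)/3 * ω^2) + b * ((1:F)/3 * 1) = c * 0 :=
      congrArg (fun z : RPS F => cS z) hab
    have hω0 : ω ≠ 0 := by
      intro h; rw [h] at hω; norm_num at hω
    have hω1 : (1 : F) - ω ≠ 0 := by
      intro h
      have hω1' : ω = 1 := by linear_combination -h
      rw [hω1'] at hω
      exact h3 (by linear_combination hω)
    have key : a * ((1 + 2*ω)/3) * (ω * (1 - ω)) = 0 := by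
      linear_combination e3 - e4
    have h5 : a * ((1 + 2*ω)/3) = 0 := by
      rcases mul_eq_zero.1 key with h | h
      · exact h
      · exact absurd h (mul_ne_zero hω0 hω1)
    exact hc (by linear_combination (1 - ω) * h5 - e2 + e3)
  · -- ⟨V, W⟩
    intro hsub
    have := hsub hP
    rw [SetLike.mem_coe, Submodule.mem_span_pair] at this
    obtain ⟨a, b, hab⟩ := this
    have e2 : a * ((1 + 2*ω^2)/3 * 1) + b * ((1:F)/3 * 1) = c * 1 :=
      congrArg (fun z : RPS F => cP z) hab
    have e3 : a * ((1 + 2*ω^2)/3 * ω^2) + b * ((1:F)/3 * 1) = c * 0 :=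
      congrArg (fun z : RPS F => cR z) hab
    have e4 : a * ((1 + 2*ω^2)/3 * ω) + b * ((1:F)/3 * 1) = c * 0 :=
      congrArg (fun z : RPS F => cS z) hab
    have hω0 : ω ≠ 0 := by
      intro h; rw [h] at hω; norm_num at hω
    have hω1 : (1 : F) - ω ≠ 0 := by
      intro h
      have hω1' : ω = 1 := by linear_combination -h
      rw [hω1'] at hω
      exact h3 (by linear_combination hω)
    have key : a * ((1 + 2*ω^2)/3) * (ω * (1 - ω)) = 0 := by
      linear_combination e4 - e3
    have h5 : a * ((1 + 2*ω^2)/3) = 0 := by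
      rcases mul_eq_zero.1 key with h | h
      · exact h
      · exact absurd h (mul_ne_zero hω0 hω1)
    exact hc (by linear_combination (1 - ω) * h5 - e2 + e4)
end

section
/- In the rock-paper-scissors monad algebra 𝔐 over a field F of characteristic different from 2, for x = P + R − 2S one has (x²)² = 9(R − P) and x(x(x²)) = 9(P − R); in particular, if also char F ≠ 3, then (x²)² ≠ x(x(x²)), so the two degree-4 monomials define different polynomial functions on 𝔐. -/
/-!
With `x = P + R - 2S` one computes `x² = 3(P - R)` and `x·x² = 3x`, so by linearity
`x(x·x²) = 3x² = 9(P - R)`, whereas `(x²)² = 9(P - R)² = 9(R - P)`. The two differ in the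
`P`-coordinate by `18`, which is nonzero when `char F ∉ {2, 3}`.
-/

namespace RPS

variable {F : Type*} [Field F]

theorem mk4_mul_mk4 (x0 a b c y0 a' b' c' : F) :
    mk4 x0 a b c * mk4 y0 a' b' c' =
      mk4 (x0 * y0) (x0 * a' + y0 * a + a * a' + a * b' + b * a')
        (x0 * b' + y0 * b + b * b' + b * c' + c * b')
        (x0 * c' + y0 * c + c * c' + a * c' + c * a') :=
  rfl

theorem smul_mk4 (r x0 a b c : F) : r • mk4 x0 a b c = mk4 (r * x0) (r * a) (r * b) (r * c) :=
  rfl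

theorem mk4_sub_mk4 (x0 a b c y0 a' b' c' : F) :
    mk4 x0 a b c - mk4 y0 a' b' c' = mk4 (x0 - y0) (a - a') (b - b') (c - c') :=
  rfl

theorem mul_smul_right (r : F) (x y : RPS F) : x * (r • y) = r • (x * y) := by
  obtain ⟨x0, a, b, c⟩ := x
  obtain ⟨y0, a', b', c'⟩ := y
  change mk4 x0 a b c * (r • mk4 y0 a' b' c') = r • (mk4 x0 a b c * mk4 y0 a' b' c')
  simp only [smul_mk4, mk4_mul_mk4]
  congr 1 <;> ring

theorem smul_eR_sub_eP_ne_smul_eP_sub_eR {c : F} (hc : 2 * c ≠ 0) :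
    c • ((eR : RPS F) - eP) ≠ c • (eP - eR) := by
  intro h
  have hP := congrArg cP h
  rw [eR, eP, mk4_sub_mk4, mk4_sub_mk4, smul_mk4, smul_mk4] at hP
  simp only [cP, mk4] at hP
  exact hc (by linear_combination -hP)

def xPRS : RPS F := mk4 0 1 1 (-2)

theorem xPRS_mul_self : (xPRS : RPS F) * xPRS = (3 : F) • (eP - eR) := by
  simp only [xPRS, eP, eR, mk4_mul_mk4, mk4_sub_mk4, smul_mk4]
  norm_num

theorem xPRS_mul_xPRS_mul_self : (xPRS : RPS F) * (xPRS * xPRS) = (3 : F) • xPRS := by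
  rw [xPRS_mul_self]
  simp only [xPRS, eP, eR, mk4_mul_mk4, mk4_sub_mk4, smul_mk4]
  norm_num

theorem xPRS_mul_self_mul_self :
    ((xPRS : RPS F) * xPRS) * (xPRS * xPRS) = (9 : F) • (eR - eP) := by
  rw [xPRS_mul_self]
  simp only [eP, eR, mk4_mul_mk4, mk4_sub_mk4, smul_mk4]
  norm_num

theorem xPRS_mul_xPRS_mul_xPRS_mul_self :
    (xPRS : RPS F) * (xPRS * (xPRS * xPRS)) = (9 : F) • (eP - eR) := by
  rw [xPRS_mul_xPRS_mul_self, mul_smul_right, xPRS_mul_self, smul_smul]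
  norm_num

end RPS

open RPS in
/-- For `x = P + R − 2S` in `𝔐` over a field of characteristic `≠ 2`:
`(x²)² = 9(R − P)` and `x(x(x²)) = 9(P − R)`; if also `char F ≠ 3` these are distinct,
so the two degree-4 monomials define different polynomial functions. -/
theorem degree_four_monomials_differ {F : Type*} [Field F] (h2 : (2 : F) ≠ 0) :
    (((mk4 0 1 1 (-2) : RPS F) * mk4 0 1 1 (-2)) * ((mk4 0 1 1 (-2) : RPS F) * mk4 0 1 1 (-2)) =
        (9 : F) • ((eR : RPS F) - eP)) ∧
    ((mk4 0 1 1 (-2) : RPS F) * ((mk4 0 1 1 (-2) : RPS F) *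
        ((mk4 0 1 1 (-2) : RPS F) * mk4 0 1 1 (-2))) = (9 : F) • ((eP : RPS F) - eR)) ∧
    ((3 : F) ≠ 0 →
      ((mk4 0 1 1 (-2) : RPS F) * mk4 0 1 1 (-2)) * ((mk4 0 1 1 (-2) : RPS F) * mk4 0 1 1 (-2)) ≠
        (mk4 0 1 1 (-2) : RPS F) * ((mk4 0 1 1 (-2) : RPS F) *
          ((mk4 0 1 1 (-2) : RPS F) * mk4 0 1 1 (-2)))) := by
  have hsq_sq := xPRS_mul_self_mul_self (F := F)
  have hx_x_sq := xPRS_mul_xPRS_mul_xPRS_mul_self (F := F)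
  refine ⟨hsq_sq, hx_x_sq, fun h3 => ?_⟩
  rw [show mk4 0 1 1 (-2) = (xPRS : RPS F) from rfl, hsq_sq, hx_x_sq]
  have h18 : 2 * (9 : F) ≠ 0 := by
    have : (9 : F) = 3 * 3 := by norm_num
    rw [this]
    exact mul_ne_zero h2 (mul_ne_zero h3 h3)
  exact smul_eR_sub_eP_ne_smul_eP_sub_eR h18
end
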